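/- arXiv:2106.11307 — 2 statements merged into one kernel-verified Lean document; each statement's English description precedes it below -/
import Mathlib

section
/- Let A = ℚ[t,t₂]/(t⁷−1, t₂⁷−1, Σ_{j=1}^{7} t^j t₂^{7−j}). Then t − t₂ is a unit in A, with inverse −(1/7) · Σ_{i=1}^{7} i · t^{7−i} t₂^{i−1}. -/
noncomputable section
open MvPolynomial Finset

/-- The ring `A = ℚ[t,t₂]/(t⁷−1, t₂⁷−1, Σ_{j=1}^{7} t^j t₂^{7−j})`. -/
abbrev A : Type :=
  MvPolynomial (Fin 2) ℚ ⧸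
    Ideal.span ({X 0 ^ 7 - 1, X 1 ^ 7 - 1,
      ∑ j ∈ range 7, X 0 ^ (j + 1) * X 1 ^ (6 - j)} : Set (MvPolynomial (Fin 2) ℚ))

def t : A := Ideal.Quotient.mk _ (X 0)
def t₂ : A := Ideal.Quotient.mk _ (X 1)

/-! For the weighted sum `S = ∑ i < 7, (i + 1) t^(6-i) t₂^i`, the product `(t - t₂) S` telescopes
to `∑ i < 7, t^(7-i) t₂^i - 7 t₂^7`. In `A` the first sum is the third defining relation read
backwards and `t₂^7 = 1`, so `(t - t₂) S = -7`. -/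

theorem sub_mul_sum_range_succ_mul_pow_mul_pow {R : Type*} [CommRing R] (x y : R) (n : ℕ) :
    (x - y) * ∑ i ∈ range (n + 1), ((i : R) + 1) * x ^ (n - i) * y ^ i
      = ∑ i ∈ range (n + 1), x ^ (n + 1 - i) * y ^ i - (n + 1) * y ^ (n + 1) := by
  induction n with
  | zero => simp
  | succ n ih =>
    have hS : ∑ i ∈ range (n + 1), ((i : R) + 1) * x ^ (n + 1 - i) * y ^ i
        = x * ∑ i ∈ range (n + 1), ((i : R) + 1) * x ^ (n - i) * y ^ i := by
      rw [mul_sum]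
      refine sum_congr rfl fun i hi => ?_
      rw [Nat.sub_add_comm (mem_range_succ_iff.mp hi), pow_succ]
      ring
    have hT : ∑ i ∈ range (n + 1), x ^ (n + 1 + 1 - i) * y ^ i
        = x * ∑ i ∈ range (n + 1), x ^ (n + 1 - i) * y ^ i := by
      rw [mul_sum]
      refine sum_congr rfl fun i hi => ?_
      rw [Nat.sub_add_comm (Nat.le_succ_of_le (mem_range_succ_iff.mp hi)), pow_succ]
      ring
    rw [sum_range_succ _ (n + 1), sum_range_succ _ (n + 1), hS, hT, mul_add, ← mul_assoc,
      mul_comm (x - y) x, mul_assoc, ih]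
    simp only [Nat.sub_self, add_tsub_cancel_left, pow_zero, pow_one, mul_one]
    push_cast
    ring

theorem Ideal.Quotient.mk_span_eq_zero {R : Type*} [CommRing R] {s : Set R} {a : R} (ha : a ∈ s) :
    Ideal.Quotient.mk (Ideal.span s) a = 0 :=
  Ideal.Quotient.eq_zero_iff_mem.mpr (Ideal.subset_span ha)

theorem t₂_pow_seven : t₂ ^ 7 = 1 := by
  rw [← sub_eq_zero]
  exact Ideal.Quotient.mk_span_eq_zero (by simp)

theorem sum_range_t_pow_mul_t₂_pow : ∑ i ∈ range 7, t ^ (7 - i) * t₂ ^ i = 0 := by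
  rw [← sum_range_reflect]
  refine Eq.trans ?_ (Ideal.Quotient.mk_span_eq_zero
    (Set.mem_insert_of_mem _ (Set.mem_insert_of_mem _ rfl)))
  simp only [map_sum, map_mul, map_pow]
  refine sum_congr rfl fun j hj => ?_
  have hj7 := mem_range.mp hj
  congr 2; omega

theorem inv_ofNat_smul_ofNat {K R : Type*} [Field K] [CharZero K] [Ring R] [Algebra K R]
    (n : ℕ) [n.AtLeastTwo] : (OfNat.ofNat n : K)⁻¹ • (OfNat.ofNat n : R) = 1 := by
  rw [Algebra.smul_def, ← map_ofNat (algebraMap K R) n, ← map_mul,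
    inv_mul_cancel₀ (OfNat.ofNat_ne_zero n), map_one]

theorem stmt2 :
    IsUnit (t - t₂) ∧
      (t - t₂) * (-(7⁻¹ : ℚ) • ∑ i ∈ range 7, ((i : A) + 1) * t ^ (6 - i) * t₂ ^ i) = 1 := by
  have hprod : (t - t₂) * ∑ i ∈ range 7, ((i : A) + 1) * t ^ (6 - i) * t₂ ^ i = -7 := by
    rw [sub_mul_sum_range_succ_mul_pow_mul_pow t t₂ 6, sum_range_t_pow_mul_t₂_pow, t₂_pow_seven]
    norm_num
  have hinv : (t - t₂) * (-(7⁻¹ : ℚ) • ∑ i ∈ range 7, ((i : A) + 1) * t ^ (6 - i) * t₂ ^ i) = 1 := by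
    rw [mul_smul_comm, hprod, neg_smul, smul_neg, neg_neg]
    exact inv_ofNat_smul_ofNat (K := ℚ) 7
  exact ⟨IsUnit.of_mul_eq_one _ hinv, hinv⟩
end
end

section
/- Let A = ℚ[t,t₂]/(t⁷−1, t₂⁷−1, Σ_{j=1}^{7} t^j t₂^{7−j}). For any integer l with gcd(l,7) = 1, the element t^l − t₂^l is a unit in A. -/
noncomputable section
open MvPolynomial Finset

/-!
Evaluating the homogeneous geometric sum `Σ_{i<n} x^i y^{n-1-i}` at `x = y` gives `n y^{n-1}`,
so `x - y` divides the difference `Σ_{i<n} x^i y^{n-1-i} - n y^{n-1}`. In `A` the sum vanishes and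
`7 t₂⁶` is a unit, hence so is `t - t₂`. For `k` coprime to `7` pick `m` with `k m ≡ 1 (mod 7)`;
then `t^k - t₂^k` divides `t^{km} - t₂^{km} = t - t₂`, a unit.
-/

section CommRing

variable {R : Type*} [CommRing R] {x y : R} {n : ℕ}

theorem sub_dvd_geom_sum₂_sub_mul_pow :
    x - y ∣ ∑ i ∈ range n, x ^ i * y ^ (n - 1 - i) - n * y ^ (n - 1) := by
  rw [← geom_sum₂_self, ← sum_sub_distrib]
  exact dvd_sum fun i _ => by
    rw [← sub_mul]
    exact (sub_dvd_pow_sub_pow x y i).mul_right _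

theorem isUnit_sub_of_geom_sum₂_eq_zero (hy : IsUnit y) (hn : IsUnit (n : R))
    (h : ∑ i ∈ range n, x ^ i * y ^ (n - 1 - i) = 0) : IsUnit (x - y) := by
  have hdvd := sub_dvd_geom_sum₂_sub_mul_pow (x := x) (y := y) (n := n)
  rw [h, zero_sub, dvd_neg] at hdvd
  exact isUnit_of_dvd_unit hdvd (hn.mul (hy.pow _))

theorem sub_dvd_of_pow_eq_one (hx : x ^ n = 1) (hy : y ^ n = 1) {k m : ℕ} (hkm : k * m % n = 1) :
    x ^ k - y ^ k ∣ x - y := by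
  have hdvd := sub_dvd_pow_sub_pow (x ^ k) (y ^ k) m
  rwa [← pow_mul, ← pow_mul, pow_eq_pow_mod (k * m) hx, pow_eq_pow_mod (k * m) hy, hkm,
    pow_one, pow_one] at hdvd

theorem IsUnit.pow_sub_pow_of_coprime (hxy : IsUnit (x - y)) (hx : x ^ n = 1) (hy : y ^ n = 1)
    {k : ℕ} (hk : k.Coprime n) (hn : 1 < n) : IsUnit (x ^ k - y ^ k) := by
  obtain ⟨m, -, hm⟩ := Nat.exists_mul_mod_eq_one_of_coprime hk hn
  exact isUnit_of_dvd_unit (sub_dvd_of_pow_eq_one hx hy hm) hxy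

end CommRing

theorem mk_eq_zero_of_mem_generators {p : MvPolynomial (Fin 2) ℚ}
    (hp : p ∈ ({X 0 ^ 7 - 1, X 1 ^ 7 - 1, ∑ j ∈ range 7, X 0 ^ (j + 1) * X 1 ^ (6 - j)} :
      Set (MvPolynomial (Fin 2) ℚ))) :
    (Ideal.Quotient.mk _ p : A) = 0 :=
  Ideal.Quotient.eq_zero_iff_mem.mpr (Ideal.subset_span hp)

theorem t_pow_seven : t ^ 7 = 1 := by
  have h := mk_eq_zero_of_mem_generators (p := X 0 ^ 7 - 1) (by simp)
  rwa [map_sub, map_pow, map_one, sub_eq_zero] at h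

theorem geom_sum₂_t_t₂ : ∑ i ∈ range 7, t ^ i * t₂ ^ (7 - 1 - i) = 0 := by
  have h := mk_eq_zero_of_mem_generators
    (p := ∑ j ∈ range 7, X 0 ^ (j + 1) * X 1 ^ (6 - j)) (by simp)
  simp only [map_sum, map_mul, map_pow, pow_succ', mul_assoc, ← mul_sum] at h
  exact (IsUnit.of_pow_eq_one t_pow_seven (by norm_num)).mul_right_eq_zero.mp h

theorem isUnit_seven : IsUnit ((7 : ℕ) : A) := by
  simpa only [map_natCast] using (IsUnit.mk0 ((7 : ℕ) : ℚ) (by norm_num)).map (algebraMap ℚ A)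

theorem isUnit_t_sub_t₂ : IsUnit (t - t₂) :=
  isUnit_sub_of_geom_sum₂_eq_zero (IsUnit.of_pow_eq_one t₂_pow_seven (by norm_num)) isUnit_seven
    geom_sum₂_t_t₂

theorem coprime_val_intCast {n : ℕ} [NeZero n] {l : ℤ} (hl : Int.gcd l n = 1) :
    ((l : ZMod n)).val.Coprime n := by
  rw [Nat.Coprime, ← Int.gcd_natCast_natCast, ZMod.val_intCast, Int.gcd_emod, hl]

/-- For `l` coprime to `7`, the element `t^l − t₂^l` is a unit in `A`. -/
theorem stmt4 (l : ℤ) (hl : Int.gcd l 7 = 1) :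
    IsUnit (t ^ ((l : ZMod 7)).val - t₂ ^ ((l : ZMod 7)).val) :=
  isUnit_t_sub_t₂.pow_sub_pow_of_coprime t_pow_seven t₂_pow_seven (coprime_val_intCast hl)
    (by norm_num)
end
end
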